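/- In dimension d = 1, let E, F ⊂ {1}, and let α ∈ A(E), β ∈ A(F) satisfy m_E(α) < 0 and m_F(β) < 0. Define, for measurable f ≥ 0 and θ ∈ (0,π), N^{(α,E),(β,F)} f(θ) = ∫_0^π χ_{{|θ−φ| ≥ π/2}} [ sup_{0<t≤1} 𝕂_t^{(α,E),(β,F)}(θ,φ) ] f(φ) dη_{α,β}(φ). Then there is a constant C such that ∫_0^π N^{(α,E),(β,F)} f(θ) dη_{α,β}(θ) ≤ C ∫_0^π f(φ) dη_{α,β}(φ) for every 0 ≤ f ∈ L¹(dη_{α,β}); i.e. N^{(α,E),(β,F)} is of strong type (1,1) with respect to η_{α,β}. -/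

import Mathlib

open MeasureTheory

/-- The Jacobi-type kernel
`K_t^{a,b}(θ,φ) = (θφ + t)^{−a−1/2} ((π−θ)(π−φ) + t)^{−b−1/2} t^{−1/2} exp(−c₂(θ−φ)²/t)`. -/
noncomputable def Kj (c₂ a b t θ φ : ℝ) : ℝ :=
  (θ * φ + t) ^ (-a - 1 / 2) * ((Real.pi - θ) * (Real.pi - φ) + t) ^ (-b - 1 / 2) *
    t ^ (-(1 : ℝ) / 2) * Real.exp (-c₂ * (θ - φ) ^ 2 / t)

/-- The product kernel `𝕂_t^{(α,E),(β,F)}(θ,φ)`: the `i`-th factor is the classical kernel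
`K_t^{α_i,β_i}` for `i ∉ E ∪ F`, and acquires the exotic factor `(θ_i φ_i)^{−2α_i}` together
with the sign flip `α_i ↦ −α_i` when `i ∈ E`, resp. `((π−θ_i)(π−φ_i))^{−2β_i}` together with
`β_i ↦ −β_i` when `i ∈ F`. -/
noncomputable def KKj (d : ℕ) (c₂ : ℝ) (E F : Finset (Fin d)) (α β : Fin d → ℝ)
    (t : ℝ) (θ φ : Fin d → ℝ) : ℝ :=
  ∏ i, ((θ i * φ i) ^ (if i ∈ E then -2 * α i else 0) *
    ((Real.pi - θ i) * (Real.pi - φ i)) ^ (if i ∈ F then -2 * β i else 0) *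
    Kj c₂ (if i ∈ E then -α i else α i) (if i ∈ F then -β i else β i) t (θ i) (φ i))

/-- The measure `η_{α,β}` on `(0,π)^d` with density `∏ θ_i^{2α_i+1}(π−θ_i)^{2β_i+1}`. -/
noncomputable def etaM (d : ℕ) (α β : Fin d → ℝ) : Measure (Fin d → ℝ) :=
  ((volume : Measure (Fin d → ℝ)).withDensity fun θ =>
    ENNReal.ofReal (∏ i, θ i ^ (2 * α i + 1) * (Real.pi - θ i) ^ (2 * β i + 1))).restrict
    {θ | ∀ i, 0 < θ i ∧ θ i < Real.pi}

/-! Where `|θ - φ| ≥ π/2`, the Gaussian factor `exp (-c₂ (θ - φ)² / t) ≤ exp (-c₂ π² / (4t))` beats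
the blow-up `t^{-M}` of the other factors as `t → 0`, so `sup_t 𝕂_t(θ, φ) ≤ B θ^u (π - θ)^v`, where
`u, v ≥ 0` are the exponents of the exotic factors (this is where `m_E(α), m_F(β) < 0` enter). The
operator is thus dominated by the rank-one operator with this kernel, whose `(1,1)` norm is the
Beta-type integral `B ∫ θ^u (π - θ)^v dη_{α,β}`, finite because `u + 2α + 1, v + 2β + 1 > -1`. -/
open Real Set
open scoped ENNReal

theorem exists_rpow_neg_mul_exp_neg_div_le {c : ℝ} (hc : 0 < c) (M : ℝ) :
    ∃ B, 0 ≤ B ∧ ∀ t ∈ Ioc (0 : ℝ) 1, t ^ (-M) * exp (-c / t) ≤ B := by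
  obtain ⟨n, hn⟩ := exists_nat_ge M
  refine ⟨n.factorial / c ^ n, by positivity, fun t ⟨ht0, ht1⟩ => ?_⟩
  have hexp : exp (-c / t) ≤ n.factorial / (c / t) ^ n := by
    rw [neg_div, exp_neg, ← inv_div ((c / t) ^ n) (n.factorial : ℝ)]
    exact inv_anti₀ (by positivity) (pow_div_factorial_le_exp _ (by positivity) n)
  calc t ^ (-M) * exp (-c / t) ≤ t ^ (-(n : ℝ)) * (n.factorial / (c / t) ^ n) := by
        gcongr ?_ * ?_
        exact rpow_le_rpow_of_exponent_ge ht0 ht1 (neg_le_neg hn)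
    _ = n.factorial / c ^ n := by
        rw [rpow_neg ht0.le, rpow_natCast, div_pow]
        field_simp

theorem rpow_add_le_rpow_abs_mul_rpow_neg_abs {L z t : ℝ} (e : ℝ) (hL : 1 ≤ L) (hz : 0 ≤ z)
    (hzt : z + t ≤ L) (ht0 : 0 < t) (ht1 : t ≤ 1) :
    (z + t) ^ e ≤ L ^ |e| * t ^ (-|e|) := by
  rcases le_or_gt 0 e with he | he
  · rw [abs_of_nonneg he]
    calc (z + t) ^ e ≤ L ^ e := rpow_le_rpow (by linarith) hzt he
      _ ≤ L ^ e * t ^ (-e) := le_mul_of_one_le_right (rpow_nonneg (by linarith) _)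
          (one_le_rpow_of_pos_of_le_one_of_nonpos ht0 ht1 (by linarith))
  · rw [abs_of_neg he, neg_neg]
    calc (z + t) ^ e ≤ t ^ e := rpow_le_rpow_of_nonpos ht0 (by linarith) he.le
      _ ≤ L ^ (-e) * t ^ e := le_mul_of_one_le_left (rpow_nonneg ht0.le _)
          (one_le_rpow hL (by linarith))

theorem mul_mem_Icc_zero_sq {x y c : ℝ} (hx : x ∈ Icc 0 c) (hy : y ∈ Icc 0 c) :
    x * y ∈ Icc 0 (c ^ 2) :=
  ⟨mul_nonneg hx.1 hy.1, sq c ▸ mul_le_mul hx.2 hy.2 hy.1 (hx.1.trans hx.2)⟩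

theorem sub_mem_Icc_zero {x c : ℝ} (hx : x ∈ Icc 0 c) : c - x ∈ Icc 0 c :=
  ⟨sub_nonneg.2 hx.2, sub_le_self c hx.1⟩

theorem intervalIntegrable_rpow_mul_rpow_sub_zero_half {p : ℝ} (q : ℝ) (hp : -1 < p) {c : ℝ}
    (hc : 0 < c) :
    IntervalIntegrable (fun x => x ^ p * (c - x) ^ q) volume 0 (c / 2) := by
  refine (intervalIntegral.intervalIntegrable_rpow' hp).mul_continuousOn ?_
  refine (continuousOn_const.sub continuousOn_id).rpow_const fun x hx => Or.inl ?_
  rw [uIcc_of_le (by positivity)] at hx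
  exact (sub_pos.2 (show x < c by linarith [hx.2])).ne'

/-- The two endpoint singularities are handled separately; the reflection `x ↦ c - x` turns the
one at `c` into one at `0`. -/
theorem integrableOn_rpow_mul_rpow_sub {p q : ℝ} (hp : -1 < p) (hq : -1 < q) (c : ℝ) :
    IntegrableOn (fun x => x ^ p * (c - x) ^ q) (Ioo 0 c) := by
  rcases le_or_gt c 0 with hc | hc
  · simp [Ioo_eq_empty_of_le hc]
  have hright : IntervalIntegrable (fun x => x ^ p * (c - x) ^ q) volume (c / 2) c := by
    have := (intervalIntegrable_rpow_mul_rpow_sub_zero_half p hq hc).comp_sub_left c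
    simp only [sub_sub_cancel, sub_zero, show c - c / 2 = c / 2 by ring] at this
    simpa only [mul_comm] using this.symm
  have h := (intervalIntegrable_rpow_mul_rpow_sub_zero_half q hp hc).trans hright
  rw [intervalIntegrable_iff_integrableOn_Ioc_of_le hc.le] at h
  exact h.mono_set Ioo_subset_Ioc_self

theorem lintegral_setLIntegral_mul_le {X : Type*} [MeasurableSpace X] {μ : Measure X}
    {S : X → Set X} (hS : ∀ θ, MeasurableSet (S θ)) {K : X → X → ℝ≥0∞} {w g : X → ℝ≥0∞}
    (hw : AEMeasurable w μ) (hg : AEMeasurable g μ)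
    (hK : ∀ᵐ θ ∂μ, ∀ᵐ φ ∂μ, φ ∈ S θ → K θ φ ≤ w θ) :
    ∫⁻ θ, ∫⁻ φ in S θ, K θ φ * g φ ∂μ ∂μ ≤ (∫⁻ θ, w θ ∂μ) * ∫⁻ φ, g φ ∂μ := by
  calc ∫⁻ θ, ∫⁻ φ in S θ, K θ φ * g φ ∂μ ∂μ ≤ ∫⁻ θ, w θ * ∫⁻ φ, g φ ∂μ ∂μ := by
        refine lintegral_mono_ae (hK.mono fun θ hθ => ?_)
        calc ∫⁻ φ in S θ, K θ φ * g φ ∂μ ≤ ∫⁻ φ in S θ, w θ * g φ ∂μ :=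
              setLIntegral_mono_ae' (hS θ) (hθ.mono fun φ h hφ => by gcongr; exact h hφ)
          _ = w θ * ∫⁻ φ in S θ, g φ ∂μ := lintegral_const_mul'' _ hg.restrict
          _ ≤ w θ * ∫⁻ φ, g φ ∂μ := by gcongr w θ * ?_; exact setLIntegral_le_lintegral _ _
    _ = (∫⁻ θ, w θ ∂μ) * ∫⁻ φ, g φ ∂μ := lintegral_mul_const'' _ hw

theorem Kj_nonneg (c₂ a b : ℝ) {t x y : ℝ} (ht : 0 ≤ t) (hx : x ∈ Icc 0 π) (hy : y ∈ Icc 0 π) :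
    0 ≤ Kj c₂ a b t x y := by
  have hxy := (mul_mem_Icc_zero_sq hx hy).1
  have hxy' := (mul_mem_Icc_zero_sq (sub_mem_Icc_zero hx) (sub_mem_Icc_zero hy)).1
  unfold Kj
  positivity

theorem exists_Kj_le_of_le_abs_sub {c₂ δ : ℝ} (hc₂ : 0 < c₂) (hδ : 0 < δ) (a b : ℝ) :
    ∃ B, 0 ≤ B ∧ ∀ t ∈ Ioc (0 : ℝ) 1, ∀ x ∈ Icc 0 π, ∀ y ∈ Icc 0 π, δ ≤ |x - y| →
      Kj c₂ a b t x y ≤ B := by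
  set L := π ^ 2 + 1
  set A := |-a - 1 / 2|
  set A' := |-b - 1 / 2|
  obtain ⟨B₀, hB₀, hB⟩ :=
    exists_rpow_neg_mul_exp_neg_div_le (c := c₂ * δ ^ 2) (by positivity) (A + A' + 1 / 2)
  refine ⟨L ^ A * L ^ A' * B₀, by positivity, fun t ht x hx y hy hxy => ?_⟩
  obtain ⟨ht0, ht1⟩ := ht
  have hL : 1 ≤ L := by nlinarith [pi_pos]
  have hbound {z : ℝ} (hz : z ∈ Icc 0 (π ^ 2)) (e : ℝ) : (z + t) ^ e ≤ L ^ |e| * t ^ (-|e|) :=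
    rpow_add_le_rpow_abs_mul_rpow_neg_abs e hL hz.1 (by linarith [hz.2]) ht0 ht1
  have hexp : exp (-c₂ * (x - y) ^ 2 / t) ≤ exp (-(c₂ * δ ^ 2) / t) := by
    have : δ ^ 2 ≤ (x - y) ^ 2 := by nlinarith [sq_abs (x - y), abs_nonneg (x - y)]
    gcongr
    nlinarith
  have hpow : t ^ (-(A + A' + 1 / 2)) = t ^ (-A) * t ^ (-A') * t ^ (-(1 : ℝ) / 2) := by
    rw [← rpow_add ht0, ← rpow_add ht0]
    ring_nf
  have hz := mul_mem_Icc_zero_sq hx hy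
  have hz' := mul_mem_Icc_zero_sq (sub_mem_Icc_zero hx) (sub_mem_Icc_zero hy)
  calc Kj c₂ a b t x y
      ≤ L ^ A * t ^ (-A) * (L ^ A' * t ^ (-A')) * t ^ (-(1 : ℝ) / 2) *
          exp (-(c₂ * δ ^ 2) / t) := by
        unfold Kj
        have h₁ : 0 ≤ x * y + t := by linarith [hz.1]
        have h₂ : 0 ≤ (π - x) * (π - y) + t := by linarith [hz'.1]
        gcongr <;> first
          | exact rpow_nonneg h₁ _ | exact rpow_nonneg h₂ _ | exact hbound hz _ | exact hbound hz' _
    _ = L ^ A * L ^ A' * (t ^ (-(A + A' + 1 / 2)) * exp (-(c₂ * δ ^ 2) / t)) := by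
        rw [hpow]; ring
    _ ≤ L ^ A * L ^ A' * B₀ := by gcongr; exact hB t ⟨ht0, ht1⟩

theorem exists_rpow_mul_Kj_le {c₂ δ u v : ℝ} (hc₂ : 0 < c₂) (hδ : 0 < δ) (hu : 0 ≤ u)
    (hv : 0 ≤ v) (a b : ℝ) :
    ∃ B, 0 ≤ B ∧ ∀ t ∈ Ioc (0 : ℝ) 1, ∀ x ∈ Icc 0 π, ∀ y ∈ Icc 0 π, δ ≤ |x - y| →
      (x * y) ^ u * ((π - x) * (π - y)) ^ v * Kj c₂ a b t x y ≤
        B * (x ^ u * (π - x) ^ v) := by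
  obtain ⟨B, hB₀, hB⟩ := exists_Kj_le_of_le_abs_sub hc₂ hδ a b
  refine ⟨π ^ u * π ^ v * B, by positivity, fun t ht x hx y hy hxy => ?_⟩
  have hx' := sub_mem_Icc_zero hx
  have hy' := sub_mem_Icc_zero hy
  calc (x * y) ^ u * ((π - x) * (π - y)) ^ v * Kj c₂ a b t x y
      = x ^ u * (π - x) ^ v * (y ^ u * (π - y) ^ v * Kj c₂ a b t x y) := by
        rw [mul_rpow hx.1 hy.1, mul_rpow hx'.1 hy'.1]; ring
    _ ≤ x ^ u * (π - x) ^ v * (π ^ u * π ^ v * B) := by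
        have := rpow_nonneg hx.1 u
        have := rpow_nonneg hx'.1 v
        gcongr <;> first
          | exact Kj_nonneg c₂ a b ht.1.le hx hy | exact hB t ht x hx y hy hxy
          | exact hy.1 | exact hy.2 | exact hy'.1 | exact hy'.2 | exact rpow_nonneg hy'.1 v
    _ = π ^ u * π ^ v * B * (x ^ u * (π - x) ^ v) := by ring

/-- The exponent of the exotic factor `(θφ)^{-2a}` of `𝕂_t` in dimension one. -/
noncomputable def exoticExponent (E : Finset (Fin 1)) (a : Fin 1 → ℝ) : ℝ :=
  if 0 ∈ E then -2 * a 0 else 0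

theorem exoticExponent_nonneg {E : Finset (Fin 1)} {a : Fin 1 → ℝ} (h : ∀ i ∈ E, a i < 0) :
    0 ≤ exoticExponent E a := by
  unfold exoticExponent
  split_ifs with hE
  · linarith [h 0 hE]
  · exact le_rfl

theorem neg_one_lt_exoticExponent_add {E : Finset (Fin 1)} {a : Fin 1 → ℝ}
    (h : ∀ i ∉ E, -1 < a i) : -1 < exoticExponent E a + (2 * a 0 + 1) := by
  unfold exoticExponent
  split_ifs with hE
  · linarith
  · linarith [h 0 hE]

theorem KKj_one (c₂ t : ℝ) (E F : Finset (Fin 1)) (α β : Fin 1 → ℝ) (θ φ : Fin 1 → ℝ) :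
    KKj 1 c₂ E F α β t θ φ =
      (θ 0 * φ 0) ^ exoticExponent E α * ((π - θ 0) * (π - φ 0)) ^ exoticExponent F β *
        Kj c₂ (if 0 ∈ E then -α 0 else α 0) (if 0 ∈ F then -β 0 else β 0) t (θ 0) (φ 0) := by
  simp only [KKj, exoticExponent, Fin.prod_univ_one]

theorem measurableSet_forall_mem_Ioo_zero_pi (d : ℕ) :
    MeasurableSet {θ : Fin d → ℝ | ∀ i, 0 < θ i ∧ θ i < π} := by
  simp only [ofPred_forall]
  exact MeasurableSet.iInter fun i => measurable_pi_apply i measurableSet_Ioo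

theorem ae_etaM_forall_mem_Ioo (d : ℕ) (α β : Fin d → ℝ) :
    ∀ᵐ θ ∂etaM d α β, ∀ i, 0 < θ i ∧ θ i < π :=
  ae_restrict_mem (measurableSet_forall_mem_Ioo_zero_pi d)

theorem lintegral_etaM_one (α β : Fin 1 → ℝ) {g : ℝ → ℝ≥0∞} (hg : Measurable g) :
    ∫⁻ θ, g (θ 0) ∂etaM 1 α β =
      ∫⁻ x in Ioo 0 π, ENNReal.ofReal (x ^ (2 * α 0 + 1) * (π - x) ^ (2 * β 0 + 1)) * g x := by
  have hbox : {θ : Fin 1 → ℝ | ∀ i, 0 < θ i ∧ θ i < π} =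
      MeasurableEquiv.funUnique (Fin 1) ℝ ⁻¹' Ioo 0 π := by
    ext θ
    simp [MeasurableEquiv.funUnique, Fin.forall_fin_one]
  rw [etaM, setLIntegral_withDensity_eq_setLIntegral_mul _ (by fun_prop)
    (show Measurable fun θ : Fin 1 → ℝ => g (θ 0) from hg.comp (measurable_pi_apply 0))
    (measurableSet_forall_mem_Ioo_zero_pi 1), hbox]
  simp only [Fin.prod_univ_one, Pi.mul_apply]
  exact (volume_preserving_funUnique (Fin 1) ℝ).setLIntegral_comp_preimage_emb
      (MeasurableEquiv.measurableEmbedding _)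
      (fun x => ENNReal.ofReal (x ^ (2 * α 0 + 1) * (π - x) ^ (2 * β 0 + 1)) * g x) (Ioo 0 π)

theorem lintegral_etaM_one_rpow_lt_top {α β : Fin 1 → ℝ} {u v : ℝ} (hu : -1 < u + (2 * α 0 + 1))
    (hv : -1 < v + (2 * β 0 + 1)) :
    ∫⁻ θ, ENNReal.ofReal (θ 0 ^ u * (π - θ 0) ^ v) ∂etaM 1 α β < ∞ := by
  rw [lintegral_etaM_one α β (g := fun x => ENNReal.ofReal (x ^ u * (π - x) ^ v)) (by fun_prop)]
  have hint := (integrableOn_rpow_mul_rpow_sub hu hv π).lintegral_lt_top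
  refine lt_of_eq_of_lt (setLIntegral_congr_fun measurableSet_Ioo fun x ⟨hx0, hxπ⟩ => ?_) hint
  have hπx : 0 < π - x := sub_pos.2 hxπ
  rw [← ENNReal.ofReal_mul (by positivity), rpow_add hx0 u, rpow_add hπx v]
  congr 1
  ring

theorem stmt19_general (c₂ : ℝ) (hc₂ : 0 < c₂) (E F : Finset (Fin 1)) (α β : Fin 1 → ℝ)
    (hαEc : ∀ i ∉ E, -1 < α i) (hβFc : ∀ i ∉ F, -1 < β i)
    (hmE : ∀ i ∈ E, α i < 0) (hmF : ∀ i ∈ F, β i < 0) :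
    ∃ C : ℝ, 0 < C ∧ ∀ f : (Fin 1 → ℝ) → ℝ, (∀ θ, 0 ≤ f θ) →
      Integrable f (etaM 1 α β) →
      (∫⁻ θ, (∫⁻ φ in {φ : Fin 1 → ℝ | Real.pi / 2 ≤ |θ 0 - φ 0|},
          (⨆ t ∈ Set.Ioc (0 : ℝ) 1, ENNReal.ofReal (KKj 1 c₂ E F α β t θ φ)) *
            ENNReal.ofReal (f φ) ∂(etaM 1 α β)) ∂(etaM 1 α β)) ≤
        ENNReal.ofReal (C * ∫ φ, f φ ∂(etaM 1 α β)) := by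
  set η := etaM 1 α β
  obtain ⟨B, hB₀, hB⟩ := exists_rpow_mul_Kj_le (δ := π / 2) hc₂ (by positivity)
    (exoticExponent_nonneg hmE) (exoticExponent_nonneg hmF)
    (if 0 ∈ E then -α 0 else α 0) (if 0 ∈ F then -β 0 else β 0)
  set w : (Fin 1 → ℝ) → ℝ≥0∞ := fun θ =>
    ENNReal.ofReal B * ENNReal.ofReal (θ 0 ^ exoticExponent E α * (π - θ 0) ^ exoticExponent F β)
  have hW : ∫⁻ θ, w θ ∂η < ∞ := by
    rw [lintegral_const_mul' _ _ ENNReal.ofReal_ne_top]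
    exact ENNReal.mul_lt_top ENNReal.ofReal_lt_top <| lintegral_etaM_one_rpow_lt_top
      (neg_one_lt_exoticExponent_add hαEc) (neg_one_lt_exoticExponent_add hβFc)
  have hK : ∀ᵐ θ ∂η, ∀ᵐ φ ∂η, φ ∈ {φ : Fin 1 → ℝ | π / 2 ≤ |θ 0 - φ 0|} →
      ⨆ t ∈ Ioc (0 : ℝ) 1, ENNReal.ofReal (KKj 1 c₂ E F α β t θ φ) ≤ w θ := by
    filter_upwards [ae_etaM_forall_mem_Ioo 1 α β] with θ hθ
    filter_upwards [ae_etaM_forall_mem_Ioo 1 α β] with φ hφ hθφ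
    refine iSup₂_le fun t ht => ?_
    rw [KKj_one]
    exact (ENNReal.ofReal_le_ofReal <| hB t ht _ ⟨(hθ 0).1.le, (hθ 0).2.le⟩
      _ ⟨(hφ 0).1.le, (hφ 0).2.le⟩ hθφ).trans_eq (ENNReal.ofReal_mul hB₀)
  refine ⟨(∫⁻ θ, w θ ∂η).toReal + 1, by positivity, fun f hf hfint => ?_⟩
  calc _ ≤ (∫⁻ θ, w θ ∂η) * ∫⁻ φ, ENNReal.ofReal (f φ) ∂η :=
        lintegral_setLIntegral_mul_le (fun θ => measurableSet_le measurable_const (by fun_prop))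
          (by fun_prop) hfint.aemeasurable.ennreal_ofReal hK
    _ ≤ ENNReal.ofReal ((∫⁻ θ, w θ ∂η).toReal + 1) * ENNReal.ofReal (∫ φ, f φ ∂η) := by
        rw [← ofReal_integral_eq_lintegral_ofReal hfint (.of_forall hf),
          ENNReal.ofReal_add ENNReal.toReal_nonneg zero_le_one, ENNReal.ofReal_toReal hW.ne]
        gcongr
        exact le_self_add
    _ = _ := (ENNReal.ofReal_mul (by positivity)).symm

/-- In dimension `d = 1`, for `E, F ⊂ {1}`, `α ∈ A(E)`, `β ∈ A(F)` with
`m_E(α) < 0` and `m_F(β) < 0`, the operator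
`N^{(α,E),(β,F)} f(θ) = ∫₀^π χ_{{|θ−φ| ≥ π/2}} [sup_{0<t≤1} 𝕂_t^{(α,E),(β,F)}(θ,φ)] f(φ)
dη_{α,β}(φ)` is of strong type `(1,1)` with respect to `η_{α,β}`. -/
theorem stmt19 (c₂ : ℝ) (hc₂ : 0 < c₂) (E F : Finset (Fin 1)) (α β : Fin 1 → ℝ)
    (hαE : ∀ i ∈ E, α i ≠ 0 ∧ α i < 1) (hαEc : ∀ i ∉ E, -1 < α i)
    (hβF : ∀ i ∈ F, β i ≠ 0 ∧ β i < 1) (hβFc : ∀ i ∉ F, -1 < β i)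
    (hmE : ∀ i ∈ E, α i < 0) (hmF : ∀ i ∈ F, β i < 0) :
    ∃ C : ℝ, 0 < C ∧ ∀ f : (Fin 1 → ℝ) → ℝ, (∀ θ, 0 ≤ f θ) →
      Integrable f (etaM 1 α β) →
      (∫⁻ θ, (∫⁻ φ in {φ : Fin 1 → ℝ | Real.pi / 2 ≤ |θ 0 - φ 0|},
          (⨆ t ∈ Set.Ioc (0 : ℝ) 1, ENNReal.ofReal (KKj 1 c₂ E F α β t θ φ)) *
            ENNReal.ofReal (f φ) ∂(etaM 1 α β)) ∂(etaM 1 α β)) ≤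
        ENNReal.ofReal (C * ∫ φ, f φ ∂(etaM 1 α β)) :=
  stmt19_general c₂ hc₂ E F α β hαEc hβFc hmE hmF
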